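/- Let n ≥ 2 be an integer, l = (√3·n/2)^{1/2}, δ ∈ ℝ², and D = {G₂ f/l + δ : f ∈ ℤ²} ∩ [0,1]². Then for any two distinct points x = (x₁, x₂) and y = (y₁, y₂) in D, the second coordinates satisfy |x₂ − y₂| ≥ (√3/6)·n^{−1}. -/
import Mathlib

open Matrix

/-- The generator matrix `G₂` of the 15-degree rotated hexagonal lattice. -/
noncomputable def G₂ : Matrix (Fin 2) (Fin 2) ℝ :=
  !![(Real.sqrt 3 - 1) / (2 * Real.sqrt 2), -(Real.sqrt 3 + 1) / (2 * Real.sqrt 2);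
     -(Real.sqrt 3 + 1) / (2 * Real.sqrt 2), (Real.sqrt 3 - 1) / (2 * Real.sqrt 2)]

lemma G₂_mulVec_zero (v : Fin 2 → ℝ) : G₂.mulVec v 0 =
    (Real.sqrt 3 - 1) / (2 * Real.sqrt 2) * v 0 + -(Real.sqrt 3 + 1) / (2 * Real.sqrt 2) * v 1 := by
  simp [G₂, Matrix.mulVec, dotProduct, Fin.sum_univ_two]

lemma G₂_mulVec_one (v : Fin 2 → ℝ) : G₂.mulVec v 1 =
    -(Real.sqrt 3 + 1) / (2 * Real.sqrt 2) * v 0 + (Real.sqrt 3 - 1) / (2 * Real.sqrt 2) * v 1 := by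
  simp [G₂, Matrix.mulVec, dotProduct, Fin.sum_univ_two]

lemma aux_irr (a b : ℤ) (h : ¬(a = 0 ∧ b = 0)) :
    Real.sqrt 3 * ((a : ℝ) - b) ≠ (a : ℝ) + b := by
  intro heq
  rcases eq_or_ne a b with rfl | hab
  · have h0 : (a : ℝ) + a = 0 := by simpa using heq.symm
    have ha : a = 0 := by exact_mod_cast (by linarith : (a : ℝ) = 0)
    exact h ⟨ha, ha⟩
  · have h3 : Irrational (Real.sqrt 3) := by
      simpa using (Nat.prime_three).irrational_sqrt
    have hab' : ((a : ℝ) - b) ≠ 0 := by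
      intro h0
      exact hab (by exact_mod_cast sub_eq_zero.mp h0)
    have heq2 : Real.sqrt 3 = ((a : ℝ) + b) / ((a : ℝ) - b) := by
      rw [eq_div_iff hab']; linarith [heq]
    exact h3 ⟨((a : ℚ) + b) / ((a : ℚ) - b), by push_cast [heq2]; ring⟩

/-- Theorem 4(ii) of He (2017): in the rotated sphere packing design with the magic
angle, any two distinct points have second coordinates at least `(√3/6) n⁻¹` apart. -/
theorem magic_angle_second_coordinate_separation
    (n : ℕ) (hn : 2 ≤ n)
    (l : ℝ) (hl : l = Real.sqrt (Real.sqrt 3 * n / 2))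
    (δ : Fin 2 → ℝ)
    (D : Set (Fin 2 → ℝ))
    (hD : D = {x | (∃ f : Fin 2 → ℤ, ∀ i,
        x i = G₂.mulVec (fun j => (f j : ℝ)) i / l + δ i) ∧
      ∀ i, x i ∈ Set.Icc (0 : ℝ) 1})
    (x y : Fin 2 → ℝ) (hx : x ∈ D) (hy : y ∈ D) (hxy : x ≠ y) :
    Real.sqrt 3 / 6 * (n : ℝ)⁻¹ ≤ |x 1 - y 1| := by
  subst hD
  obtain ⟨⟨f, hf⟩, hxI⟩ := hx
  obtain ⟨⟨g, hg⟩, hyI⟩ := hy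
  have hs3 : Real.sqrt 3 ^ 2 = 3 := Real.sq_sqrt (by norm_num)
  have hs2 : Real.sqrt 2 ^ 2 = 2 := Real.sq_sqrt (by norm_num)
  have hs3pos : 0 < Real.sqrt 3 := Real.sqrt_pos.mpr (by norm_num)
  have hs2pos : 0 < Real.sqrt 2 := Real.sqrt_pos.mpr (by norm_num)
  have hnn : (2 : ℝ) ≤ (n : ℝ) := by exact_mod_cast hn
  have hnpos : (0 : ℝ) < (n : ℝ) := by linarith
  have hl2 : l ^ 2 = Real.sqrt 3 * n / 2 := by
    rw [hl]; exact Real.sq_sqrt (by positivity)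
  have hlpos : 0 < l := by
    rw [hl]; exact Real.sqrt_pos.mpr (by positivity)
  set a : ℤ := f 0 - g 0 with hadef
  set b : ℤ := f 1 - g 1 with hbdef
  clear_value a b
  set u : ℝ := (-(Real.sqrt 3 + 1) * (a : ℝ) + (Real.sqrt 3 - 1) * (b : ℝ)) / (2 * Real.sqrt 2)
    with hudef
  set w : ℝ := ((Real.sqrt 3 - 1) * (a : ℝ) + -(Real.sqrt 3 + 1) * (b : ℝ)) / (2 * Real.sqrt 2)
    with hwdef
  clear_value u w
  have hd1 : x 1 - y 1 = u / l := by
    rw [hf 1, hg 1, G₂_mulVec_one, G₂_mulVec_one, hudef]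
    push_cast [hadef, hbdef]
    field_simp
    ring
  have hd0 : x 0 - y 0 = w / l := by
    rw [hf 0, hg 0, G₂_mulVec_zero, G₂_mulVec_zero, hwdef]
    push_cast [hadef, hbdef]
    field_simp
    ring
  have hab : ¬(a = 0 ∧ b = 0) := by
    rintro ⟨ha, hb⟩
    apply hxy
    have hf0 : f 0 = g 0 := by omega
    have hf1 : f 1 = g 1 := by omega
    have hfg : (fun j => ((f j : ℝ))) = (fun j => ((g j : ℝ))) := by
      funext j; fin_cases j <;> simp [hf0, hf1]
    funext i
    rw [hf i, hg i, hfg]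
  have hune : u ≠ 0 := by
    rw [hudef, div_ne_zero_iff]
    refine ⟨fun h0 => ?_, by positivity⟩
    exact aux_irr b a (fun hba => hab ⟨hba.2, hba.1⟩) (by push_cast; linarith)
  have hwne : w ≠ 0 := by
    rw [hwdef, div_ne_zero_iff]
    refine ⟨fun h0 => ?_, by positivity⟩
    exact aux_irr a b hab (by push_cast; linarith)
  -- algebraic identities
  have h2s2 : (2 * Real.sqrt 2) ^ 2 = 8 := by rw [mul_pow, hs2]; norm_num
  have h8u : u ^ 2 * 8 = (-(Real.sqrt 3 + 1) * (a : ℝ) + (Real.sqrt 3 - 1) * (b : ℝ)) ^ 2 := by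
    rw [hudef, div_pow, h2s2, div_mul_cancel₀]
    norm_num
  have h8w : w ^ 2 * 8 = ((Real.sqrt 3 - 1) * (a : ℝ) + -(Real.sqrt 3 + 1) * (b : ℝ)) ^ 2 := by
    rw [hwdef, div_pow, h2s2, div_mul_cancel₀]
    norm_num
  have h4u : 4 * u ^ 2 = 2 * ((a:ℝ)^2 - a*b + b^2) + Real.sqrt 3 * ((a:ℝ)^2 - b^2) := by
    linear_combination (1/2) * h8u + (((a:ℝ) - b)^2 / 2) * hs3
  have h4w : 4 * w ^ 2 = 2 * ((a:ℝ)^2 - a*b + b^2) - Real.sqrt 3 * ((a:ℝ)^2 - b^2) := by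
    linear_combination (1/2) * h8w + (((a:ℝ) - b)^2 / 2) * hs3
  set N : ℤ := 4 * (a ^ 2 - a * b + b ^ 2) ^ 2 - 3 * (a ^ 2 - b ^ 2) ^ 2 with hNdef
  clear_value N
  have hNreal : (N : ℝ) = 16 * u ^ 2 * w ^ 2 := by
    push_cast [hNdef]
    linear_combination (-(4 : ℝ) * w ^ 2) * h4u -
      (2 * ((a:ℝ)^2 - a*b + b^2) + Real.sqrt 3 * ((a:ℝ)^2 - b^2)) * h4w +
      ((a:ℝ)^2 - b^2)^2 * hs3
  have hN1 : (1 : ℝ) ≤ (N : ℝ) := by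
    have hne : (N : ℝ) ≠ 0 := by
      rw [hNreal]
      exact mul_ne_zero (mul_ne_zero (by norm_num) (pow_ne_zero _ hune)) (pow_ne_zero _ hwne)
    have hNne : N ≠ 0 := by exact_mod_cast hne
    have hNge : (0 : ℝ) ≤ (N : ℝ) := by rw [hNreal]; positivity
    have h0 : (0 : ℤ) ≤ N := by exact_mod_cast hNge
    exact_mod_cast (by omega : (1 : ℤ) ≤ N)
  have hwl : w ^ 2 ≤ l ^ 2 := by
    have hx0 := hxI 0
    have hy0 := hyI 0
    simp only [Set.mem_Icc] at hx0 hy0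
    have h2 : (x 0 - y 0) ^ 2 ≤ 1 := by nlinarith
    rw [hd0, div_pow] at h2
    have := (div_le_one (by positivity : (0:ℝ) < l ^ 2)).mp h2
    linarith
  have hmono : 16 * u ^ 2 * w ^ 2 ≤ 16 * u ^ 2 * l ^ 2 := by
    exact mul_le_mul_of_nonneg_left hwl (by positivity : (0:ℝ) ≤ 16 * u ^ 2)
  have hu2 : 1 ≤ 16 * u ^ 2 * l ^ 2 := by linarith [hN1, hNreal.le, hNreal.ge, hmono]
  have hul : (x 1 - y 1) ^ 2 * l ^ 2 = u ^ 2 := by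
    rw [hd1, div_pow]; field_simp
  have hl4 : (l ^ 2) ^ 2 = 3 * (n : ℝ) ^ 2 / 4 := by
    rw [hl2]; linear_combination ((n : ℝ) ^ 2 / 4) * hs3
  have h16 : 16 * u ^ 2 * l ^ 2 = 12 * (x 1 - y 1) ^ 2 * (n : ℝ) ^ 2 := by
    linear_combination (-16 * l ^ 2) * hul + (16 * (x 1 - y 1) ^ 2) * hl4
  have hd2 : 1 ≤ 12 * (x 1 - y 1) ^ 2 * (n : ℝ) ^ 2 := by linarith
  have htpos : 0 ≤ Real.sqrt 3 / 6 * (n : ℝ)⁻¹ := by positivity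
  have ht2 : (Real.sqrt 3 / 6 * (n : ℝ)⁻¹) ^ 2 * (12 * (n : ℝ) ^ 2) = 1 := by
    have hn0 : (n : ℝ) ≠ 0 := ne_of_gt hnpos
    rw [mul_pow, div_pow, hs3]
    field_simp
    ring
  have h12pos : (0 : ℝ) < 12 * (n : ℝ) ^ 2 := by positivity
  have ht2le : (Real.sqrt 3 / 6 * (n : ℝ)⁻¹) ^ 2 ≤ (x 1 - y 1) ^ 2 := by
    have hmul : (Real.sqrt 3 / 6 * (n : ℝ)⁻¹) ^ 2 * (12 * (n : ℝ) ^ 2) ≤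
        (x 1 - y 1) ^ 2 * (12 * (n : ℝ) ^ 2) := by linarith
    exact le_of_mul_le_mul_right hmul h12pos
  calc Real.sqrt 3 / 6 * (n : ℝ)⁻¹
      = Real.sqrt ((Real.sqrt 3 / 6 * (n : ℝ)⁻¹) ^ 2) := (Real.sqrt_sq htpos).symm
    _ ≤ Real.sqrt ((x 1 - y 1) ^ 2) := Real.sqrt_le_sqrt ht2le
    _ = |x 1 - y 1| := Real.sqrt_sq_eq_abs _
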